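/- Let A ∈ ℝ^{m×n} and M ∈ ℝ^{n×n} symmetric positive definite, with weighted SVD Uᵀ A V = Σ and r = rank(A). Then the subspace M⁻¹·Range(Aᵀ) = {M⁻¹ Aᵀ y : y ∈ ℝᵐ} equals span{v₁,…,v_r}, the span of the first r columns of V, and this subspace equals the M-orthogonal complement of the null space of A, i.e. {x ∈ ℝⁿ : xᵀ M z = 0 for all z with Az = 0}. -/

import Mathlib

open Matrix

/-- Euclidean norm of a vector. -/
noncomputable def enorm {m : ℕ} (x : Fin m → ℝ) : ℝ := Real.sqrt (x ⬝ᵥ x)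

/-- M-weighted norm of a vector: ‖x‖_M = (xᵀ M x)^{1/2}. -/
noncomputable def mnorm {n : ℕ} (M : Matrix (Fin n) (Fin n) ℝ) (x : Fin n → ℝ) : ℝ :=
  Real.sqrt (x ⬝ᵥ M.mulVec x)

/-- Weighted matrix norm ‖A‖_{M,2} = sup_{x ≠ 0} ‖Ax‖₂ / ‖x‖_M. -/
noncomputable def wnorm {m n : ℕ} (A : Matrix (Fin m) (Fin n) ℝ)
    (M : Matrix (Fin n) (Fin n) ℝ) : ℝ :=
  sSup {t : ℝ | ∃ x : Fin n → ℝ, x ≠ 0 ∧ t = _root_.enorm (A.mulVec x) / mnorm M x}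

/-- The m×n "diagonal" matrix with entries σ₁,…,σ_r on the leading diagonal and zeros elsewhere. -/
noncomputable def wsvdSigma (m n r : ℕ) (σ : Fin r → ℝ) : Matrix (Fin m) (Fin n) ℝ :=
  Matrix.of fun i j => if h : (i : ℕ) = (j : ℕ) ∧ (i : ℕ) < r then σ ⟨i, h.2⟩ else 0

lemma sigma_mulVec {m n r : ℕ} (hrn : r ≤ n) (σ : Fin r → ℝ) (x : Fin n → ℝ) (i : Fin m) :
    (wsvdSigma m n r σ).mulVec x i =
      if h : (i : ℕ) < r then σ ⟨i, h⟩ * x ⟨i, lt_of_lt_of_le h hrn⟩ else 0 := by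
  simp only [mulVec, dotProduct, wsvdSigma, of_apply]
  by_cases h : (i : ℕ) < r
  · rw [dif_pos h, Finset.sum_eq_single (⟨i, lt_of_lt_of_le h hrn⟩ : Fin n)]
    · rw [dif_pos ⟨rfl, h⟩]
    · intro j _ hj
      rw [dif_neg, zero_mul]
      rintro ⟨hij, -⟩
      exact hj (Fin.ext hij.symm)
    · intro hmem; exact absurd (Finset.mem_univ _) hmem
  · rw [dif_neg h]
    refine Finset.sum_eq_zero fun j _ => ?_
    rw [dif_neg, zero_mul]
    rintro ⟨-, hir⟩
    exact h hir

lemma sigmaT_mulVec {m n r : ℕ} (hrm : r ≤ m) (σ : Fin r → ℝ) (y : Fin m → ℝ) (j : Fin n) :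
    (wsvdSigma m n r σ)ᵀ.mulVec y j =
      if h : (j : ℕ) < r then σ ⟨j, h⟩ * y ⟨j, lt_of_lt_of_le h hrm⟩ else 0 := by
  simp only [mulVec, dotProduct, transpose_apply, wsvdSigma, of_apply]
  by_cases h : (j : ℕ) < r
  · rw [dif_pos h, Finset.sum_eq_single (⟨j, lt_of_lt_of_le h hrm⟩ : Fin m)]
    · rw [dif_pos ⟨rfl, h⟩]
    · intro i _ hi
      rw [dif_neg, zero_mul]
      rintro ⟨hij, -⟩
      exact hi (Fin.ext hij)
    · intro hmem; exact absurd (Finset.mem_univ _) hmem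
  · rw [dif_neg h]
    refine Finset.sum_eq_zero fun i _ => ?_
    rw [dif_neg, zero_mul]
    rintro ⟨hij, hir⟩
    exact h (hij ▸ hir)

lemma mem_colspan {n r : ℕ} (hrn : r ≤ n) (V : Matrix (Fin n) (Fin n) ℝ) (w : Fin n → ℝ)
    (hw : ∀ j : Fin n, r ≤ (j : ℕ) → w j = 0) :
    V.mulVec w ∈ Submodule.span ℝ (Set.range fun i : Fin r => fun l => V l (Fin.castLE hrn i)) := by
  have hcols : V.mulVec w = ∑ j : Fin n, w j • (fun l => V l j) := by
    funext l
    simp [mulVec, dotProduct, Finset.sum_apply, mul_comm]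
  have hsum : ∑ j : Fin n, w j • (fun l => V l j) =
      ∑ i : Fin r, w (Fin.castLE hrn i) • (fun l => V l (Fin.castLE hrn i)) := by
    have h1 : ∑ i : Fin r, w (Fin.castLE hrn i) • (fun l => V l (Fin.castLE hrn i))
        = ∑ j ∈ Finset.univ.image (Fin.castLE hrn), w j • (fun l => V l j) :=
      (Finset.sum_image (f := fun j : Fin n => w j • (fun l => V l j))
        (g := Fin.castLE hrn) fun a _ b _ h => Fin.castLE_injective hrn h).symm
    rw [h1]
    refine (Finset.sum_subset (Finset.subset_univ _) ?_).symm
    intro j _ hj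
    have : r ≤ (j : ℕ) := by
      by_contra hlt
      push_neg at hlt
      exact hj (Finset.mem_image.mpr ⟨⟨j, hlt⟩, Finset.mem_univ _, Fin.ext rfl⟩)
    rw [hw j this, zero_smul]
  rw [hcols, hsum]
  exact Submodule.sum_mem _ fun i _ =>
    Submodule.smul_mem _ _ (Submodule.subset_span ⟨i, rfl⟩)

theorem stmt_13 {m n r : ℕ} (A : Matrix (Fin m) (Fin n) ℝ) (M : Matrix (Fin n) (Fin n) ℝ)
    (hM : M.PosDef) (U : Matrix (Fin m) (Fin m) ℝ) (V : Matrix (Fin n) (Fin n) ℝ)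
    (σ : Fin r → ℝ) (hr : r = A.rank) (hrm : r ≤ m) (hrn : r ≤ n)
    (hU : Uᵀ * U = 1) (hV : Vᵀ * M * V = 1)
    (hσpos : ∀ i, 0 < σ i) (hσmono : ∀ i j : Fin r, i ≤ j → σ j ≤ σ i)
    (hSVD : Uᵀ * A * V = wsvdSigma m n r σ) :
    LinearMap.range (M⁻¹ * Aᵀ).mulVecLin =
      Submodule.span ℝ (Set.range fun i : Fin r => fun l => V l (Fin.castLE hrn i)) ∧
    (Submodule.span ℝ (Set.range fun i : Fin r => fun l => V l (Fin.castLE hrn i)) :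
        Set (Fin n → ℝ)) =
      {x : Fin n → ℝ | ∀ z : Fin n → ℝ, A.mulVec z = 0 → x ⬝ᵥ M.mulVec z = 0} := by
  set W := wsvdSigma m n r σ with hW
  have hMdet : IsUnit M.det := (Matrix.isUnit_iff_isUnit_det M).mp hM.isUnit
  have hMsym : Mᵀ = M := by
    have := hM.isHermitian
    simpa [Matrix.IsHermitian, Matrix.conjTranspose_eq_transpose_of_trivial] using this
  have hVinv : V * (Vᵀ * M) = 1 := mul_eq_one_comm.mp hV
  have hUUt : U * Uᵀ = 1 := mul_eq_one_comm.mp hU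
  have hA : A = U * W * (Vᵀ * M) := by
    calc A = (U * Uᵀ) * A * (V * (Vᵀ * M)) := by
            rw [hUUt, hVinv, Matrix.one_mul, Matrix.mul_one]
      _ = U * (Uᵀ * A * V) * (Vᵀ * M) := by simp only [Matrix.mul_assoc]
      _ = U * W * (Vᵀ * M) := by rw [hSVD]
  have hMAt : M⁻¹ * Aᵀ = V * Wᵀ * Uᵀ := by
    rw [hA]
    simp only [Matrix.transpose_mul, Matrix.transpose_transpose, hMsym, ← Matrix.mul_assoc]
    rw [Matrix.nonsing_inv_mul M hMdet, Matrix.one_mul]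
  have key : ∀ (j : Fin n) (z : Fin n → ℝ),
      (fun l => V l j) ⬝ᵥ M.mulVec z = ((Vᵀ * M).mulVec z) j := by
    intro j z
    rw [← Matrix.mulVec_mulVec]
    simp [mulVec, dotProduct, transpose_apply]
  constructor
  · apply le_antisymm
    · rintro x ⟨y, rfl⟩
      rw [Matrix.mulVecLin_apply, hMAt, ← Matrix.mulVec_mulVec, ← Matrix.mulVec_mulVec]
      apply mem_colspan
      intro j hj
      rw [sigmaT_mulVec hrm σ _ j, dif_neg (not_lt.mpr hj)]
    · rw [Submodule.span_le]
      rintro x ⟨i, rfl⟩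
      refine ⟨(σ i)⁻¹ • U.mulVec (Pi.single (Fin.castLE hrm i) 1), ?_⟩
      show (M⁻¹ * Aᵀ).mulVecLin ((σ i)⁻¹ • U.mulVec (Pi.single (Fin.castLE hrm i) 1)) =
        fun l => V l (Fin.castLE hrn i)
      have hsing : Wᵀ.mulVec (Pi.single (Fin.castLE hrm i) 1) =
          σ i • (Pi.single (Fin.castLE hrn i) (1 : ℝ) : Fin n → ℝ) := by
        funext j
        rw [sigmaT_mulVec hrm]
        by_cases hji : (j : ℕ) = (i : ℕ)
        · have h : (j : ℕ) < r := by rw [hji]; exact i.isLt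
          rw [dif_pos h]
          have e3 : (⟨(j : ℕ), h⟩ : Fin r) = i := Fin.ext hji
          rw [e3]
          simp [Pi.single_apply, Fin.ext_iff, hji]
        · have hne : j ≠ Fin.castLE hrn i := fun hc => hji (by rw [hc]; rfl)
          rw [Pi.smul_apply, Pi.single_apply, if_neg hne, smul_zero]
          by_cases h : (j : ℕ) < r
          · rw [dif_pos h, Pi.single_eq_of_ne, mul_zero]
            intro hc
            exact hji (by simpa [Fin.ext_iff] using hc)
          · rw [dif_neg h]
      rw [_root_.map_smul, Matrix.mulVecLin_apply, hMAt,
        ← Matrix.mulVec_mulVec (U.mulVec (Pi.single (Fin.castLE hrm i) 1)) (V * Wᵀ) Uᵀ,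
        Matrix.mulVec_mulVec _ Uᵀ U, hU, Matrix.one_mulVec,
        ← Matrix.mulVec_mulVec _ V Wᵀ, hsing,
        Matrix.mulVec_smul, Matrix.mulVec_single, smul_smul,
        inv_mul_cancel₀ (hσpos i).ne', one_smul]
      funext l
      simp
  · ext x
    simp only [SetLike.mem_coe, Set.mem_setOf_eq]
    constructor
    · intro hx z hz
      have hAz : W.mulVec ((Vᵀ * M).mulVec z) = 0 := by
        calc W.mulVec ((Vᵀ * M).mulVec z) = (W * (Vᵀ * M)).mulVec z := by
              rw [Matrix.mulVec_mulVec]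
          _ = ((Uᵀ * U) * W * (Vᵀ * M)).mulVec z := by rw [hU, Matrix.one_mul]
          _ = Uᵀ.mulVec ((U * W * (Vᵀ * M)).mulVec z) := by
              rw [Matrix.mulVec_mulVec]
              congr 1
              simp only [Matrix.mul_assoc]
          _ = Uᵀ.mulVec 0 := by rw [← hA, hz]
          _ = 0 := Matrix.mulVec_zero _
      induction hx using Submodule.span_induction with
      | mem v hmem =>
        obtain ⟨i, rfl⟩ := hmem
        rw [key]
        have := congrFun hAz (Fin.castLE hrm i)
        rw [sigma_mulVec hrn, dif_pos (by simpa using i.isLt)] at this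
        have h0 : ((Vᵀ * M).mulVec z) ⟨((Fin.castLE hrm i : Fin m) : ℕ),
            lt_of_lt_of_le (by simpa using i.isLt) hrn⟩ = 0 := by
          rcases mul_eq_zero.mp this with h | h
          · exact absurd h (by
              have : σ ⟨((Fin.castLE hrm i : Fin m) : ℕ), by simpa using i.isLt⟩ = σ i := by
                congr 1
              rw [this]
              exact (hσpos i).ne')
          · exact h
        have heq : (⟨((Fin.castLE hrm i : Fin m) : ℕ),
            lt_of_lt_of_le (by simpa using i.isLt) hrn⟩ : Fin n) = Fin.castLE hrn i :=
          Fin.ext rfl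
        rw [heq] at h0
        exact h0
      | zero => simp
      | add a b _ _ ha hb => rw [add_dotProduct, ha, hb, add_zero]
      | smul a v _ ih => rw [smul_dotProduct, ih, smul_zero]
    · intro hx
      have hxc : x = V.mulVec ((Vᵀ * M).mulVec x) := by
        rw [Matrix.mulVec_mulVec, hVinv, Matrix.one_mulVec]
      have hcz : ∀ j : Fin n, r ≤ (j : ℕ) → ((Vᵀ * M).mulVec x) j = 0 := by
        intro j hj
        have hz : A.mulVec (V.mulVec (Pi.single j 1)) = 0 := by
          rw [hA, Matrix.mulVec_mulVec]
          have h1 : U * W * (Vᵀ * M) * V = U * W := by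
            rw [Matrix.mul_assoc (U * W), hV, Matrix.mul_one]
          rw [h1, ← Matrix.mulVec_mulVec]
          have h2 : W.mulVec (Pi.single j 1) = (0 : Fin m → ℝ) := by
            funext i
            rw [sigma_mulVec hrn]
            by_cases h : (i : ℕ) < r
            · rw [dif_pos h, Pi.single_eq_of_ne, mul_zero, Pi.zero_apply]
              intro hij
              simp only [Fin.ext_iff] at hij
              omega
            · rw [dif_neg h, Pi.zero_apply]
          rw [h2, Matrix.mulVec_zero]
        have hval : x ⬝ᵥ M.mulVec (V.mulVec (Pi.single j 1)) = ((Vᵀ * M).mulVec x) j := by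
          rw [Matrix.mulVec_mulVec, Matrix.dotProduct_mulVec, ← Matrix.mulVec_transpose,
            Matrix.transpose_mul, hMsym, dotProduct_single, mul_one]
        rw [← hval]
        exact hx _ hz
      rw [hxc]
      exact mem_colspan hrn V _ hcz
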